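/- For each k with 1 ≤ k < 2^n, the Walsh–Fourier coefficient \hatφ_s^n(k) of the truncated s-kernel is strictly positive. -/

import Mathlib

open MeasureTheory Filter Topology
open scoped ENNReal Classical

/-- The Cantor dyadic group: sequences of 0s and 1s with coordinatewise addition mod 2. -/
abbrev G : Type := ℕ → ZMod 2

/-- The metric ρ(x,y) = ∑_{i=1}^∞ 2^{-i} |x_i - y_i| (coordinates indexed from 0 here). -/
noncomputable def rho (x y : G) : ℝ :=
  ∑' i : ℕ, (2:ℝ) ^ (-(i:ℝ) - 1) * (if x i = y i then 0 else 1)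

/-- The subgroup G_n of sequences vanishing in the first n coordinates. -/
def Gset (n : ℕ) : Set G := {x | ∀ i < n, x i = 0}

/-- The coset K_n(x) = x + G_n of G_n containing x. -/
def Kset (n : ℕ) (x : G) : Set G := {y | x - y ∈ Gset n}

/-- The k-th Walsh function. -/
def walsh (k : ℕ) (x : G) : ℝ :=
  ∏ i ∈ Finset.range k, if k.testBit i ∧ x i = 1 then (-1 : ℝ) else 1

/-- The s-kernel: φ_s(0) = 0 and φ_s(x) = 2^{s(n-1)} for x ∈ G_{n-1} \ G_n,
i.e. 2^{s j} where j is the first nonzero coordinate of x. -/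
noncomputable def kernel (s : ℝ) (x : G) : ℝ :=
  if h : ∃ i, x i ≠ 0 then (2:ℝ) ^ (s * (Nat.find h : ℝ)) else 0

/-- The truncated s-kernel φ_s^n. -/
noncomputable def kernelTrunc (s : ℝ) (n : ℕ) (x : G) : ℝ :=
  if x = 0 then 0 else if x ∈ Gset n then (2:ℝ) ^ (s * (n:ℝ)) else kernel s x

/-- Walsh–Fourier coefficient of the s-kernel w.r.t. a (Haar) measure lam. -/
noncomputable def phiHat (s : ℝ) (lam : Measure G) (k : ℕ) : ℝ :=
  ∫ x, kernel s x * walsh k x ∂lam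

/-- Walsh–Fourier coefficient of the truncated s-kernel. -/
noncomputable def phiHatTrunc (s : ℝ) (n : ℕ) (lam : Measure G) (k : ℕ) : ℝ :=
  ∫ x, kernelTrunc s n x * walsh k x ∂lam

/-- Walsh–Fourier coefficient of a measure μ. -/
noncomputable def muHat (μ : Measure G) (k : ℕ) : ℝ :=
  ∫ x, walsh k x ∂μ

/-- s-potential of μ at x. -/
noncomputable def potential (s : ℝ) (μ : Measure G) (x : G) : ℝ≥0∞ :=
  ∫⁻ y, ENNReal.ofReal (kernel s (x - y)) ∂μ

/-- s-energy of μ. -/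
noncomputable def energy (s : ℝ) (μ : Measure G) : ℝ≥0∞ :=
  ∫⁻ x, ∫⁻ y, ENNReal.ofReal (kernel s (x - y)) ∂μ ∂μ

/-- truncated s-energy of μ. -/
noncomputable def energyTrunc (s : ℝ) (n : ℕ) (μ : Measure G) : ℝ≥0∞ :=
  ∫⁻ x, ∫⁻ y, ENNReal.ofReal (kernelTrunc s n (x - y)) ∂μ ∂μ

/-- Diameter of a set in the metric ρ, valued in ℝ≥0∞. -/
noncomputable def diamRho (I : Set G) : ℝ≥0∞ :=
  ⨆ x ∈ I, ⨆ y ∈ I, ENNReal.ofReal (rho x y)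

/-- Pre-Hausdorff measure H^s_δ via countable covers of ρ-diameter < δ. -/
noncomputable def Hdelta (s : ℝ) (δ : ℝ≥0∞) (A : Set G) : ℝ≥0∞ :=
  ⨅ (I : ℕ → Set G) (_ : A ⊆ ⋃ i, I i) (_ : ∀ i, diamRho (I i) < δ),
    ∑' i, diamRho (I i) ^ s

/-- s-dimensional Hausdorff measure w.r.t. the metric ρ. -/
noncomputable def Hmeas (s : ℝ) (A : Set G) : ℝ≥0∞ :=
  ⨆ (δ : ℝ≥0∞) (_ : 0 < δ), Hdelta s δ A

/-- Hausdorff dimension w.r.t. the metric ρ. -/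
noncomputable def hdimRho (A : Set G) : ℝ≥0∞ :=
  ⨆ (t : ℝ) (_ : Hmeas t A = ⊤), ENNReal.ofReal t

/-! For `x ≠ 0` with first nonzero coordinate `J`, `φ_s^n(x) = 2^{s·min(n, J)}`, which telescopes
into `1 + ∑_{i<n} (2^{s(i+1)} - 2^{si}) 𝟙_{G_{i+1}}(x)`. Integrated against `w_k` (`k ≥ 1`) the
constant gives `0`. On `G_j`, `w_k ≡ 1` if `k < 2^j`; if `k ≥ 2^j`, translation by the unit vector
at a set bit `i ≥ j` of `k` preserves `G_j` and negates `w_k`, so `∫_{G_j} w_k = 0`. Hence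
`\hatφ_s^n(k)` is a sum of nonnegative terms whose last one, `(2^{sn} - 2^{s(n-1)}) λ(G_n)`, is
positive because `λ(G_n) = 2^{-n}`. -/

open Finset

lemma ZMod.two_eq_zero_or_eq_one : ∀ a : ZMod 2, a = 0 ∨ a = 1 := by decide

lemma single_add_apply_of_ne {i j : ℕ} (h : j ≠ i) (x : G) : (Pi.single i 1 + x : G) j = x j := by
  simp [h]

lemma single_add_apply_self (i : ℕ) (x : G) : (Pi.single i 1 + x : G) i = 1 + x i := by
  simp

lemma mem_Gset_succ_iff {j : ℕ} {x : G} : x ∈ Gset (j + 1) ↔ x ∈ Gset j ∧ x j = 0 := by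
  simp only [Gset, Set.mem_ofPred_eq, Nat.lt_succ_iff_lt_or_eq, or_imp, forall_and, forall_eq]

lemma single_add_mem_Gset_iff {i j : ℕ} (h : j ≤ i) {x : G} :
    Pi.single i 1 + x ∈ Gset j ↔ x ∈ Gset j := by
  refine forall₂_congr fun l hl => ?_
  rw [single_add_apply_of_ne (by omega)]

lemma mem_Gset_iff_le_find {x : G} (hx : ∃ i, x i ≠ 0) (j : ℕ) :
    x ∈ Gset j ↔ j ≤ Nat.find hx := by
  simp [Gset, Nat.le_find_iff]

lemma measurableSet_Gset (j : ℕ) : MeasurableSet (Gset j) := by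
  simp only [Gset, Set.ofPred_forall]
  exact .iInter fun i => .iInter fun _ =>
    measurableSet_eq_fun (measurable_pi_apply i) measurable_const

lemma Gset_zero : Gset 0 = Set.univ := by
  simp [Gset]

lemma Gset_diff_Gset_succ (j : ℕ) :
    Gset j \ Gset (j + 1) = (Pi.single j 1 + ·) ⁻¹' Gset (j + 1) := by
  ext x
  simp only [Set.mem_sdiff, Set.mem_preimage, mem_Gset_succ_iff, single_add_mem_Gset_iff le_rfl,
    single_add_apply_self]
  rcases ZMod.two_eq_zero_or_eq_one (x j) with h | h <;>
    simp [h, show (1 + 1 : ZMod 2) = 0 from rfl]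

section Measure

variable (lam : Measure G) [lam.IsAddLeftInvariant]

lemma measure_Gset_eq_two_mul_measure_Gset_succ (j : ℕ) :
    lam (Gset j) = 2 * lam (Gset (j + 1)) := by
  have hsub : Gset (j + 1) ⊆ Gset j := fun x hx => (mem_Gset_succ_iff.1 hx).1
  rw [← Set.union_eq_right.2 hsub, ← measure_add_sdiff (measurableSet_Gset _).nullMeasurableSet,
    Gset_diff_Gset_succ, measure_preimage_add, two_mul]

lemma two_pow_mul_measure_Gset (j : ℕ) : 2 ^ j * lam (Gset j) = lam Set.univ := by
  induction j with
  | zero => simp [Gset_zero]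
  | succ j ih => rw [← ih, measure_Gset_eq_two_mul_measure_Gset_succ lam j, pow_succ, mul_assoc]

lemma measure_Gset_ne_zero [NeZero lam] (j : ℕ) : lam (Gset j) ≠ 0 := by
  intro h
  have hU := two_pow_mul_measure_Gset lam j
  rw [h, mul_zero, eq_comm, Measure.measure_univ_eq_zero] at hU
  exact NeZero.ne lam hU

lemma measure_singleton_zero [IsFiniteMeasure lam] : lam {0} = 0 := by
  have hGset : ∀ j, lam (Gset j) = 2⁻¹ ^ j * lam Set.univ := fun j => by
    rw [← two_pow_mul_measure_Gset lam j, ← mul_assoc, ← mul_pow,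
      ENNReal.inv_mul_cancel two_ne_zero ENNReal.ofNat_ne_top, one_pow, one_mul]
  have hlim : Tendsto (fun j => lam (Gset j)) atTop (𝓝 0) := by
    simpa [hGset] using ENNReal.Tendsto.mul_const (ENNReal.tendsto_pow_atTop_nhds_zero_of_lt_one
      (ENNReal.inv_lt_one.2 ENNReal.one_lt_two)) (.inr (measure_ne_top lam Set.univ))
  refine le_antisymm (ge_of_tendsto' hlim fun j => measure_mono ?_) bot_le
  simp [Gset]

end Measure

section Walsh

lemma abs_walsh_le_one (k : ℕ) (x : G) : |walsh k x| ≤ 1 := by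
  rw [walsh, Finset.abs_prod]
  exact Finset.prod_le_one (fun _ _ => abs_nonneg _) fun _ _ => by split_ifs <;> norm_num

lemma measurable_walsh (k : ℕ) : Measurable (walsh k) :=
  Finset.measurable_prod _ fun i _ =>
    (Measurable.of_discrete
      (f := fun a : ZMod 2 => if k.testBit i ∧ a = 1 then (-1 : ℝ) else 1)).comp
        (measurable_pi_apply i)

lemma integrable_walsh (lam : Measure G) [IsFiniteMeasure lam] (k : ℕ) :
    Integrable (walsh k) lam :=
  (integrable_const 1).mono' (measurable_walsh k).aestronglyMeasurable
    (.of_forall fun x => (Real.norm_eq_abs _).trans_le (abs_walsh_le_one k x))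

lemma walsh_eq_one_of_mem_Gset {k j : ℕ} (hk : k < 2 ^ j) {x : G} (hx : x ∈ Gset j) :
    walsh k x = 1 := by
  refine Finset.prod_eq_one fun i _ => if_neg ?_
  rintro ⟨hbit, hxi⟩
  have hij : i < j := by
    by_contra! h
    simp [Nat.testBit_lt_two_pow (hk.trans_le (Nat.pow_le_pow_right two_pos h))] at hbit
  simp [hx i hij] at hxi

lemma walsh_single_add {k i : ℕ} (hbit : k.testBit i) (x : G) :
    walsh k (Pi.single i 1 + x) = -walsh k x := by
  have hi : i ∈ range k := mem_range.2 <| by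
    by_contra! h
    simp [Nat.testBit_lt_two_pow (h.trans_lt Nat.lt_two_pow_self)] at hbit
  have hfactor : ∀ l, (if k.testBit l ∧ (Pi.single i 1 + x : G) l = 1 then (-1 : ℝ) else 1) =
      (if l = i then -1 else 1) * if k.testBit l ∧ x l = 1 then -1 else 1 := by
    intro l
    by_cases hl : l = i
    · subst hl
      rw [single_add_apply_self]
      rcases ZMod.two_eq_zero_or_eq_one (x l) with h | h <;> simp [h, hbit]
    · simp [single_add_apply_of_ne hl, hl]
  simp only [walsh, hfactor, prod_mul_distrib, prod_ite_eq' _ _ (fun _ => (-1 : ℝ)), if_pos hi,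
    neg_one_mul]

variable (lam : Measure G) [lam.IsAddLeftInvariant]

lemma setIntegral_walsh_Gset_of_le {j k : ℕ} (hjk : 2 ^ j ≤ k) :
    ∫ x in Gset j, walsh k x ∂lam = 0 := by
  obtain ⟨i, hji, hbit⟩ : ∃ i ≥ j, k.testBit i := by
    by_contra! h
    exact (Nat.lt_pow_two_of_testBit k fun i hi => by simpa using h i hi).not_ge hjk
  rw [← integral_indicator (measurableSet_Gset j)]
  refine integral_eq_zero_of_add_left_eq_neg (g := Pi.single i 1) fun x => ?_
  by_cases hx : x ∈ Gset j
  · rw [Set.indicator_of_mem ((single_add_mem_Gset_iff hji).2 hx), Set.indicator_of_mem hx,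
      walsh_single_add hbit]
  · rw [Set.indicator_of_notMem (mt (single_add_mem_Gset_iff hji).1 hx),
      Set.indicator_of_notMem hx, neg_zero]

lemma setIntegral_walsh_Gset (j k : ℕ) :
    ∫ x in Gset j, walsh k x ∂lam = if k < 2 ^ j then lam.real (Gset j) else 0 := by
  split_ifs with hk
  · rw [setIntegral_congr_fun (measurableSet_Gset j) fun x hx => walsh_eq_one_of_mem_Gset hk hx,
      setIntegral_const, smul_eq_mul, mul_one]
  · exact setIntegral_walsh_Gset_of_le lam (not_lt.1 hk)

end Walsh

section Kernel

lemma Finset.sum_range_ite_lt_sub {M : Type*} [AddCommGroup M] (f : ℕ → M) (n J : ℕ) :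
    ∑ i ∈ range n, (if i < J then f (i + 1) - f i else 0) = f (min n J) - f 0 := by
  rw [← sum_filter, show (range n).filter (· < J) = range (min n J) by ext; simp, sum_range_sub]

variable (s : ℝ) (n : ℕ)

lemma kernelTrunc_of_exists_ne_zero {x : G} (hx : ∃ i, x i ≠ 0) :
    kernelTrunc s n x = (2 : ℝ) ^ (s * ↑(min n (Nat.find hx))) := by
  have hx0 : x ≠ 0 := fun h => by simp [h] at hx
  by_cases hn : n ≤ Nat.find hx
  · rw [kernelTrunc, if_neg hx0, if_pos ((mem_Gset_iff_le_find hx n).2 hn), min_eq_left hn]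
  · rw [kernelTrunc, if_neg hx0, if_neg (mt (mem_Gset_iff_le_find hx n).1 hn), kernel, dif_pos hx,
      min_eq_right (not_le.1 hn).le]

lemma kernelTrunc_eq_one_add_sum {x : G} (hx : x ≠ 0) :
    kernelTrunc s n x = 1 + ∑ i ∈ range n,
      if x ∈ Gset (i + 1) then (2 : ℝ) ^ (s * ↑(i + 1)) - 2 ^ (s * ↑i) else 0 := by
  have hex : ∃ i, x i ≠ 0 := by
    by_contra! h
    exact hx (funext h)
  simp only [mem_Gset_iff_le_find hex, Nat.succ_le_iff,
    sum_range_ite_lt_sub (fun j : ℕ => (2 : ℝ) ^ (s * ↑j)), kernelTrunc_of_exists_ne_zero s n hex]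
  simp

variable (lam : Measure G) [IsFiniteMeasure lam] [lam.IsAddLeftInvariant]

lemma phiHatTrunc_eq_sum {k : ℕ} (hk : 1 ≤ k) :
    phiHatTrunc s n lam k = ∑ i ∈ range n,
      ((2 : ℝ) ^ (s * ↑(i + 1)) - 2 ^ (s * ↑i)) * ∫ x in Gset (i + 1), walsh k x ∂lam := by
  have hae : (fun x => kernelTrunc s n x * walsh k x) =ᵐ[lam] fun x => walsh k x + ∑ i ∈ range n,
      ((2 : ℝ) ^ (s * ↑(i + 1)) - 2 ^ (s * ↑i)) * (Gset (i + 1)).indicator (walsh k) x := by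
    refine measure_mono_null (fun x hx => Set.mem_singleton_iff.2 ?_) (measure_singleton_zero lam)
    by_contra hx0
    apply hx
    simp only [Set.mem_ofPred_eq, kernelTrunc_eq_one_add_sum s n hx0, add_mul, one_mul, sum_mul,
      Set.indicator_apply, ite_mul, zero_mul, mul_ite, mul_zero]
  have hint : ∀ i ∈ range n, Integrable (fun x =>
      ((2 : ℝ) ^ (s * ↑(i + 1)) - 2 ^ (s * ↑i)) * (Gset (i + 1)).indicator (walsh k) x) lam :=
    fun i _ => ((integrable_walsh lam k).indicator (measurableSet_Gset _)).const_mul _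
  have hmean : ∫ x, walsh k x ∂lam = 0 := by
    simpa [Gset_zero] using setIntegral_walsh_Gset_of_le lam (j := 0) hk
  rw [phiHatTrunc, integral_congr_ae hae, integral_add (integrable_walsh lam k)
    (integrable_finsetSum _ hint), integral_finsetSum _ hint, hmean, zero_add]
  simp only [integral_const_mul, integral_indicator (measurableSet_Gset _)]

end Kernel

theorem stmt8_general (s : ℝ) (hs : 0 < s)
    (lam : Measure G) [IsProbabilityMeasure lam] [lam.IsAddLeftInvariant]
    (n k : ℕ) (hk1 : 1 ≤ k) (hk2 : k < 2 ^ n) :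
    0 < phiHatTrunc s n lam k := by
  obtain ⟨m, rfl⟩ : ∃ m, n = m + 1 :=
    Nat.exists_eq_succ_of_ne_zero fun hn => by simp [hn] at hk2; omega
  have hstep : ∀ i : ℕ, 0 < (2 : ℝ) ^ (s * ↑(i + 1)) - 2 ^ (s * ↑i) := fun i => by
    rw [sub_pos, Real.rpow_lt_rpow_left_iff one_lt_two]
    exact mul_lt_mul_of_pos_left (by push_cast; linarith) hs
  rw [phiHatTrunc_eq_sum s (m + 1) lam hk1]
  simp only [setIntegral_walsh_Gset]
  refine sum_pos' (fun i _ => ?_) ⟨m, self_mem_range_succ m, ?_⟩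
  · split_ifs
    · exact mul_nonneg (hstep i).le measureReal_nonneg
    · simp
  · rw [if_pos hk2]
    exact mul_pos (hstep m) (ENNReal.toReal_pos (measure_Gset_ne_zero lam _) (measure_ne_top _ _))

/-- For 1 ≤ k < 2^n, the Walsh–Fourier coefficient \hatφ_s^n(k) is strictly positive. -/
theorem stmt8 (s : ℝ) (hs : 0 < s) (hs1 : s < 1)
    (lam : Measure G) [IsProbabilityMeasure lam] [lam.IsAddLeftInvariant]
    (n k : ℕ) (hk1 : 1 ≤ k) (hk2 : k < 2 ^ n) :
    0 < phiHatTrunc s n lam k :=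
  stmt8_general s hs lam n k hk1 hk2
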